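/- For all n ≥ 1, the colon ideals satisfy (Jⁿ : x₂²) ⊆ J^{n-1} and (Jⁿ : x₃^{2(q+m)+1}) ⊆ J^{n-2} (where J^{i} denotes the unit ideal for i ≤ 0). -/

import Mathlib

/-!
Every power `Jⁿ` is a monomial ideal: it is spanned by the monomials `x₂^(2i+j) x₃^(aj+(a+1)l)`
with `i + j + l = n` and `a = q + m`, so both colon inclusions reduce to statements about
exponent vectors. Since `a ≥ 1`, `(x₂x₃^a)²` is divisible by `x₂² · x₃^(a+1)`, so every
generator of `Jⁿ` is divisible by one with `j ≤ 1`. For such a generator dividing `f · x₂²`,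
either `i ≥ 1` and one factor `x₂²` can be dropped, or all but at most one factor is `x₃^(a+1)`.
For one dividing `f · x₃^(2a+1)`, either `l ≥ 2` and two factors `x₃^(a+1)` can be dropped, or all
but at most two factors are `x₂²`.
-/

open MvPolynomial

/-- The monomial ideal `J = (x₂², x₂x₃^{q+m}, x₃^{q+m+1})` of `T = k[x₂,x₃]`
(here `X 0 = x₂`, `X 1 = x₃`). -/
noncomputable def Jideal (k : Type*) [Field k] (q m : ℕ) : Ideal (MvPolynomial (Fin 2) k) :=
  Ideal.span {X 0 ^ 2, X 0 * X 1 ^ (q+m), X 1 ^ (q+m+1)}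

/-- The monomial ideal `F = (x₃^{2(q+m)+1})` of `T`. -/
noncomputable def Fideal (k : Type*) [Field k] (q m : ℕ) : Ideal (MvPolynomial (Fin 2) k) :=
  Ideal.span {X 1 ^ (2*(q+m)+1)}

/-- `Iₙ = Σ_{n₁+2n₂=n} F^{n₂} J^{n₁}`. -/
noncomputable def Iideal (k : Type*) [Field k] (q m n : ℕ) : Ideal (MvPolynomial (Fin 2) k) :=
  ⨆ (c : ℕ × ℕ) (_ : c.1 + 2 * c.2 = n), (Fideal k q m) ^ c.2 * (Jideal k q m) ^ c.1

open Pointwise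

namespace MvPolynomial

variable {σ R : Type*} [CommSemiring R]

theorem span_monomial_image_mul_span_monomial_image (S T : Set (σ →₀ ℕ)) :
    Ideal.span ((fun s => monomial s (1 : R)) '' S) * Ideal.span ((fun s => monomial s 1) '' T)
      = Ideal.span ((fun s => monomial s (1 : R)) '' (S + T)) := by
  rw [Ideal.span_mul_span', ← Set.image2_mul, ← Set.image2_add, Set.image_image2,
    Set.image2_image_left, Set.image2_image_right]
  simp only [monomial_mul, mul_one]

theorem colon_span_monomial_image_le {S S' : Set (σ →₀ ℕ)} {e : σ →₀ ℕ}
    (h : ∀ d, (∃ s ∈ S, s ≤ d + e) → ∃ s ∈ S', s ≤ d) :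
    (Ideal.span ((fun s => monomial s (1 : R)) '' S)).colon (Ideal.span {monomial e (1 : R)})
      ≤ Ideal.span ((fun s => monomial s (1 : R)) '' S') := by
  intro f hf
  rw [Ideal.mem_colon_span_singleton, mem_ideal_span_monomial_image] at hf
  rw [mem_ideal_span_monomial_image]
  refine fun d hd => h d (hf _ ?_)
  rw [mem_support_iff, coeff_mul_monomial, mul_one]
  exact mem_support_iff.1 hd

end MvPolynomial

noncomputable def jExponent (a i j l : ℕ) : Fin 2 →₀ ℕ :=
  Finsupp.single 0 (2 * i + j) + Finsupp.single 1 (a * j + (a + 1) * l)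

def jPowExponents (a n : ℕ) : Set (Fin 2 →₀ ℕ) :=
  {s | ∃ i j l, i + j + l = n ∧ jExponent a i j l = s}

section jExponent

variable {a : ℕ}

@[simp]
theorem jExponent_apply_zero (i j l : ℕ) : jExponent a i j l 0 = 2 * i + j := by
  simp [jExponent]

@[simp]
theorem jExponent_apply_one (i j l : ℕ) : jExponent a i j l 1 = a * j + (a + 1) * l := by
  simp [jExponent]

theorem jExponent_add (i j l i' j' l' : ℕ) :
    jExponent a (i + i') (j + j') (l + l') = jExponent a i j l + jExponent a i' j' l' := by
  ext x
  fin_cases x <;> simp <;> ring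

theorem jExponent_le_iff {i j l : ℕ} {d : Fin 2 →₀ ℕ} :
    jExponent a i j l ≤ d ↔ 2 * i + j ≤ d 0 ∧ a * j + (a + 1) * l ≤ d 1 := by
  simp [Finsupp.le_def, Fin.forall_fin_two]

theorem monomial_jExponent {k : Type*} [CommSemiring k] (i j l : ℕ) :
    monomial (jExponent a i j l) (1 : k)
      = (X 0 ^ 2) ^ i * (X 0 * X 1 ^ a) ^ j * (X 1 ^ (a + 1)) ^ l := by
  rw [jExponent, ← one_mul (1 : k), ← monomial_mul, ← X_pow_eq_monomial, ← X_pow_eq_monomial]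
  ring

theorem jPowExponents_zero : jPowExponents a 0 = {0} := by
  ext s
  simp [jPowExponents, jExponent, eq_comm]

theorem jPowExponents_succ (n : ℕ) :
    jPowExponents a (n + 1) = jPowExponents a n + jPowExponents a 1 := by
  ext s
  simp only [jPowExponents, Set.mem_add, Set.mem_ofPred_eq]
  constructor
  · rintro ⟨i, j, l, hn, rfl⟩
    obtain ⟨i, rfl⟩ | ⟨j, rfl⟩ | ⟨l, rfl⟩ :
        (∃ i', i = i' + 1) ∨ (∃ j', j = j' + 1) ∨ ∃ l', l = l' + 1 := by
      rcases i with _ | i <;> rcases j with _ | j <;> rcases l with _ | l <;> simp_all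
    · exact ⟨_, ⟨i, j, l, by omega, rfl⟩, _, ⟨1, 0, 0, rfl, rfl⟩, (jExponent_add ..).symm⟩
    · exact ⟨_, ⟨i, j, l, by omega, rfl⟩, _, ⟨0, 1, 0, rfl, rfl⟩, (jExponent_add ..).symm⟩
    · exact ⟨_, ⟨i, j, l, by omega, rfl⟩, _, ⟨0, 0, 1, rfl, rfl⟩, (jExponent_add ..).symm⟩
  · rintro ⟨_, ⟨i, j, l, hn, rfl⟩, _, ⟨i', j', l', h1, rfl⟩, rfl⟩
    exact ⟨i + i', j + j', l + l', by omega, jExponent_add ..⟩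

theorem jExponent_normalize_le (ha : 1 ≤ a) (i j l : ℕ) :
    jExponent a (i + j / 2) (j % 2) (l + j / 2) ≤ jExponent a i j l := by
  rw [jExponent_le_iff, jExponent_apply_zero, jExponent_apply_one]
  have hj := Nat.mod_add_div j 2
  generalize j % 2 = r at hj ⊢
  generalize j / 2 = t at hj ⊢
  subst hj
  refine ⟨by omega, ?_⟩
  nlinarith [Nat.mul_le_mul_right t ha]

theorem exists_normal_jExponent_le {n : ℕ} {s : Fin 2 →₀ ℕ} (ha : 1 ≤ a)
    (hs : s ∈ jPowExponents a n) :
    ∃ i j l, i + j + l = n ∧ j ≤ 1 ∧ jExponent a i j l ≤ s := by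
  obtain ⟨i, j, l, hn, rfl⟩ := hs
  exact ⟨_, _, _, by omega, by omega, jExponent_normalize_le ha i j l⟩

theorem exists_jPowExponents_pred_le (ha : 1 ≤ a) {n : ℕ} (d : Fin 2 →₀ ℕ)
    (h : ∃ s ∈ jPowExponents a n, s ≤ d + Finsupp.single 0 2) :
    ∃ s ∈ jPowExponents a (n - 1), s ≤ d := by
  obtain ⟨s, hs, hsd⟩ := h
  obtain ⟨i, j, l, hn, hj, hle⟩ := exists_normal_jExponent_le ha hs
  have hle := jExponent_le_iff.1 (hle.trans hsd)
  rw [Finsupp.add_apply, Finsupp.add_apply, Finsupp.single_eq_same,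
    Finsupp.single_eq_of_ne one_ne_zero, add_zero] at hle
  rcases i with _ | i
  · refine ⟨_, ⟨0, 0, n - 1, by omega, rfl⟩, jExponent_le_iff.2 ⟨by omega, ?_⟩⟩
    calc a * 0 + (a + 1) * (n - 1) ≤ (a + 1) * l := by
          simpa using Nat.mul_le_mul_left (a + 1) (show n - 1 ≤ l by omega)
      _ ≤ d 1 := le_of_add_le_right hle.2
  · exact ⟨_, ⟨i, j, l, by omega, rfl⟩, jExponent_le_iff.2 ⟨by omega, hle.2⟩⟩

theorem exists_jPowExponents_sub_two_le (ha : 1 ≤ a) {n : ℕ} (d : Fin 2 →₀ ℕ)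
    (h : ∃ s ∈ jPowExponents a n, s ≤ d + Finsupp.single 1 (2 * a + 1)) :
    ∃ s ∈ jPowExponents a (n - 2), s ≤ d := by
  obtain ⟨s, hs, hsd⟩ := h
  obtain ⟨i, j, l, hn, hj, hle⟩ := exists_normal_jExponent_le ha hs
  have hle := jExponent_le_iff.1 (hle.trans hsd)
  rw [Finsupp.add_apply, Finsupp.add_apply, Finsupp.single_eq_same,
    Finsupp.single_eq_of_ne zero_ne_one, add_zero] at hle
  obtain ⟨l, rfl⟩ | hl : (∃ l', l = l' + 2) ∨ l ≤ 1 := by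
    rcases l with _ | _ | l <;> simp
  · exact ⟨_, ⟨i, j, l, by omega, rfl⟩, jExponent_le_iff.2 ⟨hle.1, by nlinarith⟩⟩
  · exact ⟨_, ⟨n - 2, 0, 0, by omega, rfl⟩, jExponent_le_iff.2 ⟨by omega, by simp⟩⟩

theorem jPowExponents_one : jPowExponents a 1
    = {jExponent a 1 0 0, jExponent a 0 1 0, jExponent a 0 0 1} := by
  ext s
  simp only [jPowExponents, Set.mem_ofPred_eq, Set.mem_insert_iff, Set.mem_singleton_iff]
  constructor
  · rintro ⟨i, j, l, hn, rfl⟩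
    rcases i with _ | _ | i <;> rcases j with _ | _ | j <;> rcases l with _ | _ | l <;>
      first | omega | simp
  · rintro (rfl | rfl | rfl) <;> exact ⟨_, _, _, rfl, rfl⟩

end jExponent

theorem Jideal_eq_span (k : Type*) [Field k] (q m : ℕ) :
    Jideal k q m = Ideal.span ((fun s => monomial s (1 : k)) '' jPowExponents (q + m) 1) := by
  rw [Jideal, jPowExponents_one, Set.image_insert_eq, Set.image_insert_eq, Set.image_singleton]
  simp only [monomial_jExponent]
  ring_nf

theorem Jideal_pow_eq_span (k : Type*) [Field k] (q m n : ℕ) :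
    Jideal k q m ^ n
      = Ideal.span ((fun s => monomial s (1 : k)) '' jPowExponents (q + m) n) := by
  induction n with
  | zero => simp [jPowExponents_zero, Ideal.one_eq_top]
  | succ n ih =>
    rw [pow_succ, ih, Jideal_eq_span, span_monomial_image_mul_span_monomial_image,
      ← jPowExponents_succ]

theorem statement19_general (k : Type*) [Field k] (q m : ℕ) (hq : 1 ≤ q) :
    ∀ n : ℕ, 1 ≤ n →
      Submodule.colon ((Jideal k q m) ^ n)
          (Ideal.span {(X 0 : MvPolynomial (Fin 2) k) ^ 2})
        ≤ (Jideal k q m) ^ (n-1) ∧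
      Submodule.colon ((Jideal k q m) ^ n)
          (Ideal.span {(X 1 : MvPolynomial (Fin 2) k) ^ (2*(q+m)+1)})
        ≤ (Jideal k q m) ^ (n-2) := by
  intro n _
  have ha : 1 ≤ q + m := by omega
  simp only [Jideal_pow_eq_span, X_pow_eq_monomial]
  exact ⟨colon_span_monomial_image_le (exists_jPowExponents_pred_le ha),
    colon_span_monomial_image_le (exists_jPowExponents_sub_two_le ha)⟩

/-- For all `n ≥ 1`, `(Jⁿ : x₂²) ⊆ J^{n-1}` and
`(Jⁿ : x₃^{2(q+m)+1}) ⊆ J^{n-2}` (with `J⁰ = T` the unit ideal, via truncated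
subtraction so that `J^{n-2}` is the unit ideal for `n ≤ 2`). -/
theorem statement19 (k : Type*) [Field k] (q m : ℕ) (hq : 1 ≤ q) (hm : 1 ≤ m) :
    ∀ n : ℕ, 1 ≤ n →
      Submodule.colon ((Jideal k q m) ^ n)
          (Ideal.span {(X 0 : MvPolynomial (Fin 2) k) ^ 2})
        ≤ (Jideal k q m) ^ (n-1) ∧
      Submodule.colon ((Jideal k q m) ^ n)
          (Ideal.span {(X 1 : MvPolynomial (Fin 2) k) ^ (2*(q+m)+1)})
        ≤ (Jideal k q m) ^ (n-2) :=
  statement19_general k q m hq
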